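/- Let U : T_q × T_q → ℂ satisfy (L applied in the first variable) U(x,y) = (L applied in the second variable) U(x,y) for all vertices x, y ∈ T_q. Then for all x, y ∈ T_q and all n ∈ ℕ: Σ_{x' ∈ S(x,n)} U(x',y) = Σ_{y' ∈ S(y,n)} U(x,y'). -/

import Mathlib

open scoped BigOperators

/-- A homogeneous tree of degree `q + 1`: a connected acyclic simple graph in which
every vertex has exactly `q + 1` neighbours. Spheres for the graph distance are finite. -/
structure HomTree (q : ℕ) where
  V : Type
  G : SimpleGraph V
  conn : G.Connected
  acyclic : G.IsAcyclic
  sphereFin : ∀ (x : V) (n : ℕ), {y : V | G.dist x y = n}.Finite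
  nbrFin : ∀ x : V, {y : V | G.Adj x y}.Finite
  degree : ∀ x : V, (nbrFin x).toFinset.card = q + 1

namespace HomTree

variable {q : ℕ}

/-- The sphere `S(x,n)` as a finite set. -/
noncomputable def sphere (T : HomTree q) (x : T.V) (n : ℕ) : Finset T.V :=
  (T.sphereFin x n).toFinset

/-- The volume `δ(n)` of spheres. -/
def delta (q n : ℕ) : ℕ := if n = 0 then 1 else (q + 1) * q ^ (n - 1)

/-- The combinatorial Laplacian on the tree. -/
noncomputable def lap (T : HomTree q) (f : T.V → ℂ) (x : T.V) : ℂ :=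
  f x - (1 / ((q : ℂ) + 1)) * ∑ y ∈ T.sphere x 1, f y

/-- Spherical means. -/
noncomputable def sphMean (T : HomTree q) (f : T.V → ℂ) (x : T.V) (n : ℕ) : ℂ :=
  (1 / (delta q n : ℂ)) * ∑ y ∈ T.sphere x n, f y

/-- Real powers of `q`, as a complex number. -/
noncomputable def qpow (q : ℕ) (x : ℝ) : ℂ := (((q : ℝ) ^ x : ℝ) : ℂ)

/-- `γ = 2 / (q^{1/2} + q^{-1/2})`. -/
noncomputable def gam (q : ℕ) : ℝ := 2 / ((q : ℝ) ^ ((1 : ℝ)/2) + (q : ℝ) ^ (-(1 : ℝ)/2))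

/-- The combinatorial Laplacian on `ℤ`. -/
noncomputable def lapZ (φ : ℤ → ℂ) (m : ℤ) : ℂ := φ m - (φ (m + 1) + φ (m - 1)) / 2

lemma ball_finite (T : HomTree q) (x : T.V) (n : ℕ) :
    {y : T.V | T.G.dist x y ≤ n}.Finite := by
  have h : {y : T.V | T.G.dist x y ≤ n} ⊆ ⋃ m ∈ Set.Iic n, {y : T.V | T.G.dist x y = m} := by
    intro y hy
    exact Set.mem_biUnion hy rfl
  exact (((Set.finite_Iic n)).biUnion fun m _ => T.sphereFin x m).subset h

/-- The ball `B(x,n)` as a finite set. -/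
noncomputable def ball (T : HomTree q) (x : T.V) (n : ℕ) : Finset T.V :=
  (T.ball_finite x n).toFinset

/-- The operator `M_n` (with `M_n = 0` for `n < 0`). -/
noncomputable def Mop (T : HomTree q) (n : ℤ) (f : T.V → ℂ) (x : T.V) : ℂ :=
  if 0 ≤ n then
    qpow q (-(n : ℝ) / 2) *
      ∑ y ∈ (T.ball x n.toNat).filter (fun y => (n.toNat - T.G.dist x y) % 2 = 0), f y
  else 0

/-- The operator `C_n = (M_{|n|} - M_{|n|-2})/2`, `C_0 = Id`. -/
noncomputable def Cop (T : HomTree q) (n : ℤ) (f : T.V → ℂ) (x : T.V) : ℂ :=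
  if n = 0 then f x else (Mop T |n| f x - Mop T (|n| - 2) f x) / 2

/-- The operator `S_n = sign(n) · M_{|n|-1}`. -/
noncomputable def Sop (T : HomTree q) (n : ℤ) (g : T.V → ℂ) (x : T.V) : ℂ :=
  (n.sign : ℂ) * Mop T (|n| - 1) g x

/-- `u` solves the shifted wave equation on the tree. -/
def IsWaveSol (T : HomTree q) (u : T.V → ℤ → ℂ) : Prop :=
  ∀ (x : T.V) (n : ℤ),
    u x (n + 1) + u x (n - 1) = qpow q (-(1 : ℝ)/2) * ∑ y ∈ T.sphere x 1, u y n

/-- `u` solves the Cauchy problem for the shifted wave equation with data `f`, `g`. -/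
def IsCauchy (T : HomTree q) (f g : T.V → ℂ) (u : T.V → ℤ → ℂ) : Prop :=
  IsWaveSol T u ∧ (∀ x, u x 0 = f x) ∧ ∀ x, (u x 1 - u x (-1)) / 2 = g x

/-- Kinetic energy. -/
noncomputable def kinetic (T : HomTree q) (u : T.V → ℤ → ℂ) (n : ℤ) : ℝ :=
  (1/2) * ∑' x : T.V, ‖(u x (n + 1) - u x (n - 1)) / 2‖ ^ 2

/-- Potential energy. -/
noncomputable def potential (T : HomTree q) (u : T.V → ℤ → ℂ) (n : ℤ) : ℝ :=
  (1 / (4 * (q : ℝ))) * ∑' p : T.V × T.V,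
      (if T.G.dist p.1 p.2 = 2 then ‖(u p.1 n - u p.2 n) / 2‖ ^ 2 else 0)
    - (((q : ℝ) - 1) ^ 2 / (8 * (q : ℝ))) * ∑' x : T.V, ‖u x n‖ ^ 2

/-- The two-step Laplacian. -/
noncomputable def lap2 (T : HomTree q) (f : T.V → ℂ) (x : T.V) : ℂ :=
  f x - (1 / ((q : ℂ) * ((q : ℂ) + 1))) * ∑ y ∈ T.sphere x 2, f y

end HomTree

/-!
Fix `x, y` and put `H(m, n) = ∑_{x' ∈ S(x,m)} ∑_{y' ∈ S(y,n)} U(x', y')`. In a tree a vertex of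
`S(x, n + 1)` has exactly one neighbour in `S(x, n)`, and a vertex of `S(x, n - 1)` has
`c_n` neighbours in `S(x, n)`, where `c_1 = q + 1` and `c_n = q` for `n ≥ 2`. Hence summing the
unit-sphere sums of `f` over `S(x, n)` gives `∑_{S(x,n+1)} f + c_n ∑_{S(x,n-1)} f`. The
hypothesis says precisely that unit-sphere sums of `U` agree in the two variables, whence
`H(m + 1, n) + c_m H(m - 1, n) = H(m, n + 1) + c_n H(m, n - 1)`.
Along each antidiagonal `m + n = s` this makes `H(m, n) - H(n, m)` constant, by induction on `s`;
being also antisymmetric it vanishes, and `H(n, 0) = H(0, n)` is the claim.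
-/

open Finset

namespace SimpleGraph

variable {V : Type*} {G : SimpleGraph V}

lemma IsTree.existsUnique_adj_dist_eq_of_dist_eq_add_one (hG : G.IsTree) {x w : V} {n : ℕ}
    (hw : G.dist x w = n + 1) : ∃! z, G.Adj w z ∧ G.dist x z = n := by
  classical
  obtain ⟨p, hp, hpl⟩ := hG.connected.exists_path_of_dist x w
  have hnil : ¬ p.Nil := by rw [Walk.not_nil_iff_lt_length]; omega
  refine ⟨p.penultimate, ⟨(p.adj_penultimate hnil).symm, ?_⟩, ?_⟩
  · have hle : G.dist x p.penultimate ≤ n :=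
      (dist_le p.dropLast).trans (by rw [Walk.length_dropLast]; omega)
    have := hG.dist_eq_dist_add_one_of_adj x (p.adj_penultimate hnil)
    omega
  · rintro z ⟨hwz, hz⟩
    obtain ⟨r, hr, hrl⟩ := hG.connected.exists_path_of_dist x z
    have hwr : w ∉ r.support := fun hwr => by
      have := (dist_le (r.takeUntil w hwr)).trans (r.length_takeUntil_le_length hwr)
      omega
    have hzp : z ∈ p.support := by
      by_contra hzp
      exact hwr (hG.isAcyclic.mem_support_of_ne_mem_support_of_adj_of_isPath hr hp hwz.symm hzp)
    exact hG.isAcyclic.eq_penultimate_of_adj_end hp hwz hzp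

end SimpleGraph

lemma symm_of_recursion_eq {M : Type*} [AddCommGroup M] [IsAddTorsionFree M]
    (H : ℕ → ℕ → M) (c : ℕ → ℕ) (hc : c 0 = 0)
    (hrec : ∀ m n, H (m + 1) n + c m • H (m - 1) n = H m (n + 1) + c n • H m (n - 1))
    (i j : ℕ) : H i j = H j i := by
  set D : ℕ → ℕ → M := fun m n => H m n - H n m
  have hD : ∀ m n, D (m + 1) n - D m (n + 1) = c n • D m (n - 1) - c m • D (m - 1) n := by
    intro m n
    simp only [D, smul_sub]
    linear_combination (norm := abel) hrec m n + hrec n m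
  suffices ∀ s m n, m + n = s → D m n = 0 from sub_eq_zero.mp (this _ i j rfl)
  intro s
  induction s using Nat.strong_induction_on with
  | _ s ih =>
    have hlow : ∀ m n, m + n + 2 = s → D m n = 0 := fun m n h => ih _ (by omega) m n rfl
    have hstep : ∀ m n, m + 1 + n = s → D (m + 1) n = D m (n + 1) := by
      intro m n hmn
      have h₁ : c n • D m (n - 1) = 0 := by
        rcases n with _ | n
        · rw [hc, zero_smul]
        · rw [Nat.add_sub_cancel, hlow m n (by omega), smul_zero]
      have h₂ : c m • D (m - 1) n = 0 := by
        rcases m with _ | m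
        · rw [hc, zero_smul]
        · rw [Nat.add_sub_cancel, hlow m n (by omega), smul_zero]
      rw [← sub_eq_zero, hD, h₁, h₂, sub_zero]
    have hconst : ∀ m n, m + n = s → D m n = D 0 s := by
      intro m
      induction m with
      | zero => rintro n rfl; rw [zero_add]
      | succ m ihm => intro n hmn; rw [hstep m n hmn, ihm (n + 1) (by omega)]
    have hanti : D 0 s = -D 0 s := by
      conv_rhs => rw [← hconst s 0 (add_zero s)]
      simp only [D, neg_sub]
    have htwo : (2 : ℕ) • D 0 s = 0 := by
      rw [two_nsmul]
      exact eq_neg_iff_add_eq_zero.mp hanti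
    intro m n hmn
    rw [hconst m n hmn, two_nsmul_eq_zero.mp htwo]

namespace HomTree

open SimpleGraph

variable {q : ℕ} {T : HomTree q}

@[simp]
lemma mem_sphere {x y : T.V} {n : ℕ} : y ∈ T.sphere x n ↔ T.G.dist x y = n :=
  Set.Finite.mem_toFinset _

lemma mem_sphere_one {x y : T.V} : y ∈ T.sphere x 1 ↔ T.G.Adj x y := by
  rw [mem_sphere, dist_eq_one_iff_adj]

variable (T)

lemma isTree : T.G.IsTree := ⟨T.conn, T.acyclic⟩

lemma sphere_zero (x : T.V) : T.sphere x 0 = {x} := by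
  ext y
  rw [mem_sphere, mem_singleton, T.conn.dist_eq_zero_iff, eq_comm]

lemma card_sphere_one (x : T.V) : #(T.sphere x 1) = q + 1 := by
  rw [← T.degree x]
  congr 1
  ext y
  rw [mem_sphere_one, Set.Finite.mem_toFinset]
  rfl

lemma filter_adj_sphere [DecidableRel T.G.Adj] (x w : T.V) (n : ℕ) :
    {z ∈ T.sphere x n | T.G.Adj z w} = {z ∈ T.sphere w 1 | T.G.dist x z = n} := by
  ext z
  rw [mem_filter, mem_filter, mem_sphere_one, mem_sphere, adj_comm, and_comm]

lemma card_filter_adj_sphere_of_dist_eq_add_one [DecidableRel T.G.Adj] {x w : T.V} {n : ℕ}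
    (hw : T.G.dist x w = n + 1) : #{z ∈ T.sphere x n | T.G.Adj z w} = 1 := by
  rw [filter_adj_sphere, card_eq_one_iff_existsUnique]
  simpa only [mem_filter, mem_sphere_one] using
    T.isTree.existsUnique_adj_dist_eq_of_dist_eq_add_one hw

/-- The coefficient `c_n` above; its value `0` at `n = 0` neutralizes the truncated
`S(x, 0 - 1) = S(x, 0)`. -/
def childCount (q n : ℕ) : ℕ := if n = 0 then 0 else if n = 1 then q + 1 else q

lemma card_filter_adj_sphere_of_dist_eq [DecidableRel T.G.Adj] {x w : T.V} {m : ℕ}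
    (hw : T.G.dist x w = m) : #{z ∈ T.sphere x (m + 1) | T.G.Adj z w} = childCount q (m + 1) := by
  rw [filter_adj_sphere]
  rcases m with _ | k
  · obtain rfl : x = w := T.conn.dist_eq_zero_iff.mp hw
    rw [filter_true_of_mem fun z hz => mem_sphere.mp hz, card_sphere_one]
    rfl
  · have hparent : {z ∈ T.sphere w 1 | ¬T.G.dist x z = k + 1 + 1}
        = {z ∈ T.sphere w 1 | T.G.dist x z = k} := by
      refine filter_congr fun z hz => ?_
      have := T.isTree.dist_eq_dist_add_one_of_adj x (mem_sphere_one.mp hz)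
      omega
    have hsplit := card_filter_add_card_filter_not (s := T.sphere w 1)
      (p := fun z => T.G.dist x z = k + 1 + 1)
    rw [hparent, ← filter_adj_sphere T x w k, card_filter_adj_sphere_of_dist_eq_add_one T hw,
      card_sphere_one] at hsplit
    have hcount : childCount q (k + 1 + 1) = q := by simp [childCount]
    omega

lemma sum_sphere_sum_sphere_one {M : Type*} [AddCommMonoid M] (x : T.V) (n : ℕ) (f : T.V → M) :
    ∑ z ∈ T.sphere x n, ∑ w ∈ T.sphere z 1, f w
      = ∑ w ∈ T.sphere x (n + 1), f w + childCount q n • ∑ w ∈ T.sphere x (n - 1), f w := by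
  classical
  rcases n with _ | k
  · simp [sphere_zero, childCount]
  have hdisj : Disjoint (T.sphere x (k + 2)) (T.sphere x k) :=
    disjoint_left.mpr fun w h₁ h₂ => by rw [mem_sphere] at h₁ h₂; omega
  rw [Nat.add_sub_cancel, sum_comm' (t' := T.sphere x (k + 2) ∪ T.sphere x k)
      (s' := fun w => {z ∈ T.sphere x (k + 1) | T.G.Adj z w}), sum_union hdisj]
  · simp only [sum_const, smul_sum]
    congr 1
    · refine sum_congr rfl fun w hw => ?_
      rw [card_filter_adj_sphere_of_dist_eq_add_one T (mem_sphere.mp hw), one_smul]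
    · refine sum_congr rfl fun w hw => ?_
      rw [card_filter_adj_sphere_of_dist_eq T (mem_sphere.mp hw)]
  · intro z w
    simp only [mem_filter, mem_union, mem_sphere, dist_eq_one_iff_adj]
    constructor
    · rintro ⟨hz, hzw⟩
      have := T.isTree.dist_eq_dist_add_one_of_adj x hzw
      exact ⟨⟨hz, hzw⟩, by omega⟩
    · exact fun h => h.1

lemma sum_sphere_one_eq_of_lap_eq {U : T.V → T.V → ℂ}
    (hU : ∀ x y : T.V, T.lap (fun x' => U x' y) x = T.lap (fun y' => U x y') y) (x y : T.V) :
    ∑ x' ∈ T.sphere x 1, U x' y = ∑ y' ∈ T.sphere y 1, U x y' := by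
  have h := hU x y
  simp only [lap, sub_right_inj] at h
  exact mul_left_cancel₀ (one_div_ne_zero (Nat.cast_add_one_ne_zero q)) h

noncomputable def sphereSum {M : Type*} [AddCommMonoid M] (U : T.V → T.V → M) (x y : T.V)
    (m n : ℕ) : M :=
  ∑ x' ∈ T.sphere x m, ∑ y' ∈ T.sphere y n, U x' y'

lemma sphereSum_recursion {M : Type*} [AddCommMonoid M] {U : T.V → T.V → M}
    (hU : ∀ a b, ∑ a' ∈ T.sphere a 1, U a' b = ∑ b' ∈ T.sphere b 1, U a b')
    (x y : T.V) (m n : ℕ) :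
    T.sphereSum U x y (m + 1) n + childCount q m • T.sphereSum U x y (m - 1) n
      = T.sphereSum U x y m (n + 1) + childCount q n • T.sphereSum U x y m (n - 1) := by
  calc _ = ∑ y' ∈ T.sphere y n, ∑ z ∈ T.sphere x m, ∑ w ∈ T.sphere z 1, U w y' := by
          simp only [sphereSum, sum_sphere_sum_sphere_one, sum_add_distrib, smul_sum]
          rw [sum_comm, sum_comm (s := T.sphere x (m - 1))]
    _ = ∑ z ∈ T.sphere x m, ∑ y' ∈ T.sphere y n, ∑ w ∈ T.sphere y' 1, U z w := by
          rw [sum_comm]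
          simp only [hU]
    _ = _ := by
          simp only [sphereSum, sum_sphere_sum_sphere_one, sum_add_distrib, smul_sum]

end HomTree

open HomTree in
theorem stmt3_general {q : ℕ} (T : HomTree q) (U : T.V → T.V → ℂ)
    (hU : ∀ x y : T.V, T.lap (fun x' => U x' y) x = T.lap (fun y' => U x y') y) :
    ∀ (x y : T.V) (n : ℕ),
      ∑ x' ∈ T.sphere x n, U x' y = ∑ y' ∈ T.sphere y n, U x y' := by
  intro x y n
  have hsymm := symm_of_recursion_eq (T.sphereSum U x y) (childCount q) rfl
    (T.sphereSum_recursion (T.sum_sphere_one_eq_of_lap_eq hU) x y) n 0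
  simpa [sphereSum, sphere_zero] using hsymm

open HomTree in
/-- special case of the discrete Ásgeirsson theorem. -/
theorem stmt3 {q : ℕ} (hq : 2 ≤ q) (T : HomTree q) (U : T.V → T.V → ℂ)
    (hU : ∀ x y : T.V, T.lap (fun x' => U x' y) x = T.lap (fun y' => U x y') y) :
    ∀ (x y : T.V) (n : ℕ),
      ∑ x' ∈ T.sphere x n, U x' y = ∑ y' ∈ T.sphere y n, U x y' :=
  stmt3_general T U hU
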